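/- arXiv:2210.16172 — 2 statements merged into one kernel-verified Lean document; each statement's English description precedes it below -/
import Mathlib

section
/- Fix λ, μ > 0 and p > 0. With a, b the roots as functions of λᵢ (a > b, both negative, a+b = −(λ+μ), ab = λᵢμ), define Q(λᵢ) := e^{−(λ+μ)p} + (λ+μ)/(a−b)·(e^{ap} − e^{bp}). Then Q is strictly decreasing in λᵢ on the interval where (λ+μ)² > 4λᵢμ. -/
noncomputable def PP (lam mu p li : ℝ) : ℝ :=
  let D := Real.sqrt ((lam + mu)^2 - 4 * li * mu)
  let a := (-(lam + mu) + D)/2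
  let b := (-(lam + mu) - D)/2
  Real.exp (-(lam + mu) * p) + (lam + mu) / (a - b) * (Real.exp (a * p) - Real.exp (b * p))

/-!
With `s = λ + μ` and `D = a - b = √(s² - 4λᵢμ)`,
`Q = e^{-sp} + s p e^{-sp/2} · sinh (Dp/2) / (Dp/2)`.
`D` decreases as `λᵢ` grows, while `sinh x / x` increases on `(0, ∞)`, being the slope of the
secant of the strictly convex function `sinh` through the origin.
-/

open Real Set

lemma strictConvexOn_sinh : StrictConvexOn ℝ (Ici 0) sinh :=
  StrictMonoOn.strictConvexOn_of_deriv (convex_Ici 0) continuous_sinh.continuousOn <| by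
    rw [Real.deriv_sinh, interior_Ici]
    exact cosh_strictMonoOn.mono Ioi_subset_Ici_self

lemma strictMonoOn_sinh_div_self : StrictMonoOn (fun x => sinh x / x) (Ioi 0) := by
  intro x hx y hy hxy
  simpa using strictConvexOn_sinh.secant_strict_mono self_mem_Ici (mem_Ici_of_Ioi hx)
    (mem_Ici_of_Ioi hy) hx.ne' hy.ne' hxy

lemma exp_add_sub_exp_sub (c x : ℝ) : exp (c + x) - exp (c - x) = 2 * exp c * sinh x := by
  rw [sinh_eq, exp_add, exp_sub, exp_neg]
  field_simp

lemma div_mul_exp_sub_exp_eq_sinh_div (s p D : ℝ) (hp : p ≠ 0) (hD : D ≠ 0) :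
    s / ((-s + D) / 2 - (-s - D) / 2) * (exp ((-s + D) / 2 * p) - exp ((-s - D) / 2 * p)) =
      s * p * exp (-s * p / 2) * (sinh (D * p / 2) / (D * p / 2)) := by
  rw [show (-s + D) / 2 - (-s - D) / 2 = D by ring,
    show (-s + D) / 2 * p = -s * p / 2 + D * p / 2 by ring,
    show (-s - D) / 2 * p = -s * p / 2 - D * p / 2 by ring, exp_add_sub_exp_sub]
  field_simp

theorem PP_strictAnti (lam mu p : ℝ) (hlam : 0 < lam) (hmu : 0 < mu) (hp : 0 < p) :
    StrictAntiOn (PP lam mu p)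
      {li | li ∈ Set.Ioc 0 lam ∧ 4 * li * mu < (lam + mu)^2} := by
  intro l₁ ⟨_, h₁⟩ l₂ ⟨_, h₂⟩ hlt
  set D₁ := √((lam + mu)^2 - 4 * l₁ * mu)
  set D₂ := √((lam + mu)^2 - 4 * l₂ * mu)
  have hD₂ : 0 < D₂ := sqrt_pos.2 (by linarith)
  have hD : D₂ < D₁ := sqrt_lt_sqrt (by linarith) (by gcongr)
  have hD₁ : 0 < D₁ := hD₂.trans hD
  have hsinhc : sinh (D₂ * p / 2) / (D₂ * p / 2) < sinh (D₁ * p / 2) / (D₁ * p / 2) :=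
    strictMonoOn_sinh_div_self (by simp only [mem_Ioi]; positivity)
      (by simp only [mem_Ioi]; positivity) (by gcongr)
  simp only [PP]
  rw [div_mul_exp_sub_exp_eq_sinh_div _ _ _ hp.ne' hD₂.ne',
    div_mul_exp_sub_exp_eq_sinh_div _ _ _ hp.ne' hD₁.ne']
  gcongr
end

section
/- With the PAoI density f_P as above, the second moment is ∫₀^∞ x² f_P(x) dx = 2/(λ+μ)² + 2(λ+μ)²/(λᵢ²μ²), and hence the variance of PAoI equals 1/(λ+μ)² + (λ+μ)²/(λᵢ²μ²) − 2/(λᵢμ). -/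
/-!
The density is `s e^{-sx}` plus a combination of `e^{ax}` and `e^{bx}`, so each moment is a
combination of the Gamma integrals `∫₀^∞ xᵏ e^{cx} dx = k! / (-c)^{k+1}`. In the cross terms the
Vieta relations `a + b = -s`, `ab = λᵢμ` make the factor `1/(a - b)` cancel, leaving
`E[X] = 1/s + s/(λᵢμ)` and `E[X²] = 2/s² + 2s²/(λᵢμ)²`.
-/

open MeasureTheory Real Set Nat

theorem integral_pow_mul_exp_mul_Ioi (n : ℕ) {c : ℝ} (hc : c < 0) :
    ∫ x in Ioi (0 : ℝ), x ^ n * exp (c * x) = n ! / (-c) ^ (n + 1) := by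
  have h := integral_rpow_mul_exp_neg_mul_Ioi (a := n + 1) (r := -c) (by positivity) (by linarith)
  push_cast [add_sub_cancel_right, rpow_natCast, neg_mul, neg_neg, Gamma_nat_eq_factorial] at h
  rw [h, ← Nat.cast_add_one, rpow_natCast, one_div, inv_pow, inv_mul_eq_div]

theorem integrableOn_pow_mul_exp_mul_Ioi (n : ℕ) {c : ℝ} (hc : c < 0) :
    IntegrableOn (fun x : ℝ => x ^ n * exp (c * x)) (Ioi 0) :=
  Integrable.of_integral_ne_zero <| by
    rw [integral_pow_mul_exp_mul_Ioi n hc]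
    have : 0 < -c := by linarith
    positivity

/-- With `s = λ + μ` and `a, b` the roots of `t² + s t + λᵢμ`. -/
noncomputable def paoiDensity (s a b x : ℝ) : ℝ :=
  s * (exp (-s * x) + (b * exp (b * x) - a * exp (a * x)) / (a - b))

theorem integral_pow_mul_paoiDensity (k : ℕ) {s a b : ℝ} (hs : 0 < s) (ha : a < 0)
    (hb : b < 0) :
    ∫ x in Ioi (0 : ℝ), x ^ k * paoiDensity s a b x
      = s * (k ! / s ^ (k + 1)
          + (b * (k ! / (-b) ^ (k + 1)) - a * (k ! / (-a) ^ (k + 1))) / (a - b)) := by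
  have hs' : -s < 0 := by linarith
  have hsplit : (fun x => x ^ k * paoiDensity s a b x) = fun x =>
      s * (x ^ k * exp (-s * x)) + s / (a - b) *
        (b * (x ^ k * exp (b * x)) - a * (x ^ k * exp (a * x))) := by
    ext x
    simp only [paoiDensity]
    ring
  have hIs := integrableOn_pow_mul_exp_mul_Ioi k hs'
  have hIb := (integrableOn_pow_mul_exp_mul_Ioi k hb).const_mul b
  have hIa := (integrableOn_pow_mul_exp_mul_Ioi k ha).const_mul a
  rw [hsplit, integral_add (hIs.const_mul s) ((hIb.sub' hIa).const_mul _), integral_const_mul,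
    integral_const_mul, integral_sub hIb hIa, integral_const_mul, integral_const_mul,
    integral_pow_mul_exp_mul_Ioi k hs', integral_pow_mul_exp_mul_Ioi k hb,
    integral_pow_mul_exp_mul_Ioi k ha, neg_neg]
  ring

section Moments

variable {s p a b : ℝ}

theorem integral_mul_paoiDensity (ha : a < 0) (hab : b < a) (hsum : a + b = -s)
    (hprod : a * b = p) :
    ∫ x in Ioi (0 : ℝ), x * paoiDensity s a b x = 1 / s + s / p := by
  have hb : b < 0 := hab.trans ha
  have hs : s ≠ 0 := by linarith
  have hp : p ≠ 0 := hprod ▸ (mul_pos_of_neg_of_neg ha hb).ne'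
  have hmix : (b * (1 / (-b) ^ 2) - a * (1 / (-a) ^ 2)) / (a - b) = 1 / p := by
    have : a - b ≠ 0 := by linarith
    have := ha.ne
    have := hb.ne
    rw [neg_sq, neg_sq, ← hprod]
    field_simp
  have h := integral_pow_mul_paoiDensity 1 (s := s) (by linarith) ha hb
  simp only [pow_one, factorial_one, cast_one, hmix] at h
  rw [h]
  field_simp

theorem integral_sq_mul_paoiDensity (ha : a < 0) (hab : b < a) (hsum : a + b = -s)
    (hprod : a * b = p) :
    ∫ x in Ioi (0 : ℝ), x ^ 2 * paoiDensity s a b x = 2 / s ^ 2 + 2 * s ^ 2 / p ^ 2 := by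
  have hb : b < 0 := hab.trans ha
  have hs : s ≠ 0 := by linarith
  have hp : p ≠ 0 := hprod ▸ (mul_pos_of_neg_of_neg ha hb).ne'
  have hmix : (b * (2 / (-b) ^ 3) - a * (2 / (-a) ^ 3)) / (a - b) = 2 * s / p ^ 2 := by
    have : a - b ≠ 0 := by linarith
    have := ha.ne
    have := hb.ne
    rw [Odd.neg_pow (by decide), Odd.neg_pow (by decide), ← hprod,
      show s = -(a + b) by linarith]
    field_simp
    ring
  rw [integral_pow_mul_paoiDensity 2 (s := s) (by linarith) ha hb, factorial_two, cast_two, hmix]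
  field_simp
  ring

end Moments

theorem paoi_second_moment_and_variance_general (lam mu li a b : ℝ)
    (hab : b < a) (ha : a < 0)
    (hsum : a + b = -(lam + mu)) (hprod : a * b = li * mu) :
    (∫ x in Set.Ioi (0:ℝ),
        x^2 * ((lam + mu) * (Real.exp (-(lam + mu) * x)
          + (b * Real.exp (b * x) - a * Real.exp (a * x)) / (a - b)))
      = 2 / (lam + mu)^2 + 2 * (lam + mu)^2 / (li^2 * mu^2)) ∧
    ((∫ x in Set.Ioi (0:ℝ),
        x^2 * ((lam + mu) * (Real.exp (-(lam + mu) * x)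
          + (b * Real.exp (b * x) - a * Real.exp (a * x)) / (a - b))))
      - (∫ x in Set.Ioi (0:ℝ),
          x * ((lam + mu) * (Real.exp (-(lam + mu) * x)
            + (b * Real.exp (b * x) - a * Real.exp (a * x)) / (a - b))))^2
      = 1 / (lam + mu)^2 + (lam + mu)^2 / (li^2 * mu^2) - 2 / (li * mu)) := by
  have h1 := integral_mul_paoiDensity ha hab hsum hprod
  have h2 := integral_sq_mul_paoiDensity ha hab hsum hprod
  unfold paoiDensity at h1 h2
  rw [mul_pow] at h2
  refine ⟨h2, ?_⟩
  have hs : lam + mu ≠ 0 := by linarith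
  have hp : li * mu ≠ 0 := hprod ▸ (mul_pos_of_neg_of_neg ha (hab.trans ha)).ne'
  rw [h2, h1]
  field_simp
  ring

theorem paoi_second_moment_and_variance (lam mu li a b : ℝ)
    (hlam : 0 < lam) (hmu : 0 < mu) (hli : 0 < li)
    (hab : b < a) (ha : a < 0) (hb : b < 0)
    (hsum : a + b = -(lam + mu)) (hprod : a * b = li * mu) :
    (∫ x in Set.Ioi (0:ℝ),
        x^2 * ((lam + mu) * (Real.exp (-(lam + mu) * x)
          + (b * Real.exp (b * x) - a * Real.exp (a * x)) / (a - b)))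
      = 2 / (lam + mu)^2 + 2 * (lam + mu)^2 / (li^2 * mu^2)) ∧
    ((∫ x in Set.Ioi (0:ℝ),
        x^2 * ((lam + mu) * (Real.exp (-(lam + mu) * x)
          + (b * Real.exp (b * x) - a * Real.exp (a * x)) / (a - b))))
      - (∫ x in Set.Ioi (0:ℝ),
          x * ((lam + mu) * (Real.exp (-(lam + mu) * x)
            + (b * Real.exp (b * x) - a * Real.exp (a * x)) / (a - b))))^2
      = 1 / (lam + mu)^2 + (lam + mu)^2 / (li^2 * mu^2) - 2 / (li * mu)) :=
  paoi_second_moment_and_variance_general lam mu li a b hab ha hsum hprod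
end
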